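/- arXiv:2511.07898 — 6 statements merged into one kernel-verified Lean document; each statement's English description precedes it below -/
import Mathlib

section
/- Let A be a d-th order CP tensor with factor matrices U_p ∈ ℝ^{n_p×R}, and let k be an integer with 1 ≤ k ≤ ∏_{p=1}^d n_p. Consider the optimization problem: maximize Σ_{j=1}^k Σ_{r=1}^R ∏_{p=1}^d ( Σ_{l=1}^{n_p} U_p(l,r)·X_p(l,j)² ) over families of matrices X_p ∈ ℝ^{n_p×k} (p = 1,…,d) subject to ‖X_p(:,j)‖₂ = 1 for all p and j, and ∏_{p=1}^d ⟨X_p(:,i), X_p(:,j)⟩ = 0 for all i ≠ j. Then this maximum is attained and equals the sum of the k largest entries of A. -/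
/-!
For feasible factors `X`, the Kronecker columns `y j i = ∏ p, X p (i p) j` form an orthonormal
family in `ℝ^I` (their inner products factor over `p`), and the objective equals
`∑ i, c i * A i` with weights `c i = ∑ j, y j i ^ 2`. Bessel's inequality gives `0 ≤ c i ≤ 1`, and
`∑ i, c i = k`, so the objective is a fractional choice of `k` entries and is bounded by the sum of
the `k` largest entries. Conversely, unit-vector factors pick out any `k` distinct entries.
-/

open Finset

theorem Finset.exists_injective_sum_comp_eq {I M : Type*} [AddCommMonoid M] (T : Finset I)
    (f : I → M) : ∃ φ : Fin #T → I, Function.Injective φ ∧ ∑ j, f (φ j) = ∑ i ∈ T, f i :=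
  ⟨fun j => T.equivFin.symm j, Subtype.val_injective.comp T.equivFin.symm.injective, by
    rw [Equiv.sum_comp T.equivFin.symm (fun i => f i), sum_coe_sort]⟩

theorem apply_le_apply_of_forall_card_eq_sum_le {I : Type*} [DecidableEq I] (A : I → ℝ)
    {T : Finset I} (hmax : ∀ T' : Finset I, #T' = #T → ∑ i ∈ T', A i ≤ ∑ i ∈ T, A i)
    {i t : I} (hi : i ∉ T) (ht : t ∈ T) : A i ≤ A t := by
  have hi' : i ∉ T.erase t := fun h => hi (mem_of_mem_erase h)
  have hswap := hmax (insert i (T.erase t))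
    (by rw [card_insert_of_notMem hi', card_erase_add_one ht])
  rw [sum_insert hi', sum_erase_eq_sub ht] at hswap
  linarith

section TopSum

variable {I : Type*} [Fintype I] [DecidableEq I] (A : I → ℝ)

theorem sum_mul_le_sum_of_le_of_le {c : I → ℝ} {T : Finset I} {a : ℝ}
    (hc0 : ∀ i, 0 ≤ c i) (hc1 : ∀ i, c i ≤ 1) (hc : ∑ i, c i = #T)
    (hout : ∀ i ∉ T, A i ≤ a) (hin : ∀ i ∈ T, a ≤ A i) :
    ∑ i, c i * A i ≤ ∑ i ∈ T, A i := by
  -- `∑ i, (c i - 1_T i) * (A i - a)` is termwise nonpositive, and its `a`-part vanishes.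
  have hterm : ∀ i, (c i - if i ∈ T then 1 else 0) * (A i - a) ≤ 0 := by
    intro i
    split_ifs with h
    · exact mul_nonpos_of_nonpos_of_nonneg (by linarith [hc1 i]) (by linarith [hin i h])
    · exact mul_nonpos_of_nonneg_of_nonpos (by linarith [hc0 i]) (by linarith [hout i h])
  have hexpand : ∑ i, (c i - if i ∈ T then 1 else 0) * (A i - a)
      = ∑ i, c i * A i - ∑ i ∈ T, A i - (∑ i, c i - #T) * a := by
    simp only [sub_mul, mul_sub, sum_sub_distrib, ite_mul, one_mul, zero_mul, sum_ite_mem,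
      univ_inter, ← sum_mul, sum_const, nsmul_eq_mul]
  rw [hc, sub_self, zero_mul, sub_zero] at hexpand
  linarith [sum_nonpos fun i (_ : i ∈ univ) => hterm i]

theorem sum_mul_le_sum_of_forall_card_eq_sum_le {c : I → ℝ} {T : Finset I}
    (hc0 : ∀ i, 0 ≤ c i) (hc1 : ∀ i, c i ≤ 1) (hc : ∑ i, c i = #T)
    (hmax : ∀ T' : Finset I, #T' = #T → ∑ i ∈ T', A i ≤ ∑ i ∈ T, A i) :
    ∑ i, c i * A i ≤ ∑ i ∈ T, A i := by
  rcases T.eq_empty_or_nonempty with rfl | hT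
  · have hc_zero : ∀ i, c i = 0 := fun i =>
      (sum_eq_zero_iff_of_nonneg fun i _ => hc0 i).1 (by simpa using hc) i (mem_univ i)
    simp [hc_zero]
  · obtain ⟨t, ht, hmin⟩ := T.exists_min_image A hT
    exact sum_mul_le_sum_of_le_of_le A hc0 hc1 hc
      (fun i hi => apply_le_apply_of_forall_card_eq_sum_le A hmax hi ht) hmin

end TopSum

theorem Orthonormal.sum_sq_apply_le_one {I J : Type*} [Fintype I] [DecidableEq I] [Fintype J]
    {v : J → EuclideanSpace ℝ I} (hv : Orthonormal ℝ v) (i : I) : ∑ j, v j i ^ 2 ≤ 1 := by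
  simpa [EuclideanSpace.inner_single_right] using
    hv.sum_inner_products_le (s := univ) (EuclideanSpace.single i (1 : ℝ))

theorem Orthonormal.sum_sum_sq_apply {I J : Type*} [Fintype I] [Fintype J]
    {v : J → EuclideanSpace ℝ I} (hv : Orthonormal ℝ v) :
    ∑ i, ∑ j, v j i ^ 2 = Fintype.card J := by
  rw [sum_comm]
  simp [← EuclideanSpace.real_norm_sq_eq, hv.1]

section CPTensor

variable {ι J ρ : Type*} {κ : ι → Type*} [∀ p, Fintype (κ p)]

def basisFactors [∀ p, DecidableEq (κ p)] (φ : J → ∀ p, κ p) : ∀ p, Matrix (κ p) J ℝ :=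
  fun p l j => if φ j p = l then 1 else 0

theorem sum_sq_basisFactors [∀ p, DecidableEq (κ p)] (φ : J → ∀ p, κ p) (p : ι) (j : J) :
    ∑ l, basisFactors φ p l j ^ 2 = 1 := by
  simp [basisFactors]

variable [Fintype ι]

def cpTensor [Fintype ρ] (U : ∀ p, Matrix (κ p) ρ ℝ) (i : ∀ p, κ p) : ℝ :=
  ∑ r, ∏ p, U p (i p) r

def tensorColumn (X : ∀ p, Matrix (κ p) J ℝ) (j : J) : EuclideanSpace ℝ (∀ p, κ p) :=
  WithLp.toLp 2 fun i => ∏ p, X p (i p) j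

theorem prod_sum_basisFactors_mul_eq_zero [∀ p, DecidableEq (κ p)] {φ : J → ∀ p, κ p}
    (hφ : Function.Injective φ) {a b : J} (hab : a ≠ b) :
    ∏ p, ∑ l, basisFactors φ p l a * basisFactors φ p l b = 0 := by
  obtain ⟨p, hp⟩ := Function.ne_iff.1 (hφ.ne hab)
  refine prod_eq_zero (mem_univ p) (sum_eq_zero fun l _ => ?_)
  grind [basisFactors]

theorem sum_prod_sum_mul_sq_basisFactors [Fintype ρ] [∀ p, DecidableEq (κ p)]
    (U : ∀ p, Matrix (κ p) ρ ℝ) (φ : J → ∀ p, κ p) (j : J) :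
    ∑ r, ∏ p, ∑ l, U p l r * basisFactors φ p l j ^ 2 = cpTensor U (φ j) := by
  simp [basisFactors, cpTensor]

variable [DecidableEq ι]

theorem inner_tensorColumn (X : ∀ p, Matrix (κ p) J ℝ) (a b : J) :
    inner ℝ (tensorColumn X a) (tensorColumn X b) = ∏ p, ∑ l, X p l a * X p l b := by
  rw [Fintype.prod_sum]
  simp [tensorColumn, PiLp.inner_apply, prod_mul_distrib, mul_comm]

theorem orthonormal_tensorColumn {X : ∀ p, Matrix (κ p) J ℝ}
    (hnorm : ∀ p j, ∑ l, X p l j ^ 2 = 1)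
    (horth : ∀ a b, a ≠ b → ∏ p, ∑ l, X p l a * X p l b = 0) :
    Orthonormal ℝ (tensorColumn X) := by
  classical
  rw [orthonormal_iff_ite]
  intro a b
  rw [inner_tensorColumn]
  split_ifs with h
  · subst h
    simp [← sq, hnorm]
  · exact horth a b h

theorem sum_prod_sum_mul_sq_eq [Fintype ρ] (U : ∀ p, Matrix (κ p) ρ ℝ)
    (X : ∀ p, Matrix (κ p) J ℝ) (j : J) :
    ∑ r, ∏ p, ∑ l, U p l r * X p l j ^ 2 = ∑ i, tensorColumn X j i ^ 2 * cpTensor U i := by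
  simp_rw [Fintype.prod_sum, cpTensor, mul_sum]
  rw [sum_comm]
  simp [tensorColumn, prod_mul_distrib, prod_pow, mul_comm]

end CPTensor

theorem stmt_0_general (d R k : ℕ) (n : Fin d → ℕ)
    (U : ∀ p : Fin d, Matrix (Fin (n p)) (Fin R) ℝ)
    (hk2 : k ≤ ∏ p, n p) :
    ∃ m : ℝ,
      IsGreatest {s : ℝ | ∃ φ : Fin k → (∀ p : Fin d, Fin (n p)),
          Function.Injective φ ∧
          s = ∑ j : Fin k, ∑ r : Fin R, ∏ p : Fin d, U p (φ j p) r} m ∧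
      IsGreatest {v : ℝ | ∃ X : ∀ p : Fin d, Matrix (Fin (n p)) (Fin k) ℝ,
          (∀ (p : Fin d) (j : Fin k), ∑ l, (X p l j) ^ 2 = 1) ∧
          (∀ i j : Fin k, i ≠ j → ∏ p : Fin d, (∑ l, X p l i * X p l j) = 0) ∧
          v = ∑ j : Fin k, ∑ r : Fin R,
              ∏ p : Fin d, (∑ l, U p l r * (X p l j) ^ 2)} m := by
  classical
  obtain ⟨T, hTk, hTmax⟩ : ∃ T : Finset (∀ p, Fin (n p)), #T = k ∧
      ∀ T', #T' = k → ∑ i ∈ T', cpTensor U i ≤ ∑ i ∈ T, cpTensor U i := by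
    obtain ⟨T, hT, hmax⟩ := exists_max_image (powersetCard k univ)
      (fun T => ∑ i ∈ T, cpTensor U i) (powersetCard_nonempty.2 (by simpa using hk2))
    exact ⟨T, mem_powersetCard_univ.1 hT, fun T' hT' => hmax T' (mem_powersetCard_univ.2 hT')⟩
  subst hTk
  obtain ⟨φ, hφ, hφT⟩ := T.exists_injective_sum_comp_eq (cpTensor U)
  refine ⟨∑ i ∈ T, cpTensor U i, ⟨⟨φ, hφ, hφT.symm⟩, ?_⟩,
    ⟨⟨basisFactors φ, sum_sq_basisFactors φ, fun a b => prod_sum_basisFactors_mul_eq_zero hφ,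
      by simp only [sum_prod_sum_mul_sq_basisFactors, hφT]⟩, ?_⟩⟩
  · rintro s ⟨ψ, hψ, rfl⟩
    simpa [cpTensor] using hTmax (univ.map ⟨ψ, hψ⟩) (by simp)
  · rintro v ⟨X, hnorm, horth, rfl⟩
    have hX := orthonormal_tensorColumn hnorm horth
    simp_rw [sum_prod_sum_mul_sq_eq]
    rw [sum_comm]
    simp_rw [← sum_mul]
    exact sum_mul_le_sum_of_forall_card_eq_sum_le _ (fun i => sum_nonneg fun j _ => sq_nonneg _)
      hX.sum_sq_apply_le_one (by simp [hX.sum_sum_sq_apply]) hTmax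

/-- The maximum of the continuous constrained reformulation is
attained and equals the sum of the `k` largest entries of the CP tensor `A`,
where `A (i₁,…,i_d) = ∑ r, ∏ p, U p (i p) r`. -/
theorem stmt_0 (d R k : ℕ) (n : Fin d → ℕ)
    (U : ∀ p : Fin d, Matrix (Fin (n p)) (Fin R) ℝ)
    (hk1 : 1 ≤ k) (hk2 : k ≤ ∏ p, n p) :
    ∃ m : ℝ,
      IsGreatest {s : ℝ | ∃ φ : Fin k → (∀ p : Fin d, Fin (n p)),
          Function.Injective φ ∧
          s = ∑ j : Fin k, ∑ r : Fin R, ∏ p : Fin d, U p (φ j p) r} m ∧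
      IsGreatest {v : ℝ | ∃ X : ∀ p : Fin d, Matrix (Fin (n p)) (Fin k) ℝ,
          (∀ (p : Fin d) (j : Fin k), ∑ l, (X p l j) ^ 2 = 1) ∧
          (∀ i j : Fin k, i ≠ j → ∏ p : Fin d, (∑ l, X p l i * X p l j) = 0) ∧
          v = ∑ j : Fin k, ∑ r : Fin R,
              ∏ p : Fin d, (∑ l, U p l r * (X p l j) ^ 2)} m :=
  stmt_0_general d R k n U hk2
end

section
/- Let A be a d-th order CP tensor with factor matrices U_p ∈ ℝ^{n_p×R}, and let k be an integer with 1 ≤ k ≤ ∏_{p=1}^d n_p. Suppose the matrices X_p ∈ ℝ^{n_p×k} (p = 1,…,d) satisfy ‖X_p(:,j)‖₂ = 1 for all p and j, and ∏_{p=1}^d ⟨X_p(:,i), X_p(:,j)⟩ = 0 for all i ≠ j. Then Σ_{j=1}^k Σ_{r=1}^R ∏_{p=1}^d ( Σ_{l=1}^{n_p} U_p(l,r)·X_p(l,j)² ) is at most the sum of the k largest entries of A. -/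
/-!
With `c s = ∑ j, ∏ p, X p (s p) j ^ 2`, the objective equals `∑ s, c s * A s`. The hypotheses say
that the columns of the Khatri–Rao product of the `X p` are orthonormal, so Bessel's inequality
against the unit vector at `s` gives `0 ≤ c s ≤ 1`, while `∑ s, c s = k`. Weights in `[0, 1]`
summing to `k` cannot beat the indicator of a `k`-set `T` maximising `∑ s ∈ T, A s`: by exchange,
every entry in `T` dominates every entry outside, so for a threshold `θ` between them
`(c s - 1_T s) * (A s - θ) ≤ 0` termwise.
-/

open Finset

namespace Matrix

section OrthonormalColumns

variable {α κ : Type*} [Fintype α] [Fintype κ] [DecidableEq κ] {M : Matrix α κ ℝ}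

theorem sum_row_sq_le_one_of_transpose_mul_self_eq_one (hM : Mᵀ * M = 1) (a : α) :
    ∑ j, M a j ^ 2 ≤ 1 := by
  classical
  let col : κ → EuclideanSpace ℝ α := fun j => WithLp.toLp 2 fun b => M b j
  have hcol : Orthonormal ℝ col := by
    rw [orthonormal_iff_ite]
    intro i j
    simpa [col, PiLp.inner_apply, mul_apply, mul_comm, one_apply] using congrFun (congrFun hM i) j
  simpa [col, EuclideanSpace.inner_single_right]
    using hcol.sum_inner_products_le (s := univ) (EuclideanSpace.single a (1 : ℝ))

theorem sum_sum_sq_eq_card_of_transpose_mul_self_eq_one (hM : Mᵀ * M = 1) :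
    ∑ a, ∑ j, M a j ^ 2 = Fintype.card κ := by
  rw [sum_comm]
  simpa [sq, mul_apply, trace] using congrArg trace hM

end OrthonormalColumns

section KhatriRao

variable {ι κ ρ : Type*} [Fintype ι] [DecidableEq ι] {m : ι → Type*} [∀ p, Fintype (m p)]

def khatriRao (X : ∀ p, Matrix (m p) κ ℝ) : Matrix (∀ p, m p) κ ℝ :=
  fun s j => ∏ p, X p (s p) j

def cpTensor [Fintype ρ] (U : ∀ p, Matrix (m p) ρ ℝ) (s : ∀ p, m p) : ℝ :=
  ∑ r, ∏ p, U p (s p) r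

theorem transpose_khatriRao_mul_khatriRao_apply (X : ∀ p, Matrix (m p) κ ℝ) (i j : κ) :
    ((khatriRao X)ᵀ * khatriRao X) i j = ∏ p, ∑ l, X p l i * X p l j := by
  simp only [mul_apply, transpose_apply, khatriRao, ← prod_mul_distrib, Fintype.prod_sum]

theorem transpose_khatriRao_mul_khatriRao_eq_one [DecidableEq κ] (X : ∀ p, Matrix (m p) κ ℝ)
    (hnorm : ∀ p j, ∑ l, X p l j ^ 2 = 1)
    (horth : ∀ i j, i ≠ j → ∏ p, ∑ l, X p l i * X p l j = 0) :
    (khatriRao X)ᵀ * khatriRao X = 1 := by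
  ext i j
  rw [transpose_khatriRao_mul_khatriRao_apply, one_apply]
  split_ifs with hij
  · simp [hij, ← sq, hnorm]
  · exact horth i j hij

theorem sum_sum_prod_sum_mul_sq_eq [Fintype κ] [Fintype ρ] (U : ∀ p, Matrix (m p) ρ ℝ)
    (X : ∀ p, Matrix (m p) κ ℝ) :
    ∑ j, ∑ r, ∏ p, ∑ l, U p l r * X p l j ^ 2
      = ∑ s, (∑ j, khatriRao X s j ^ 2) * cpTensor U s := by
  simp only [Fintype.prod_sum, prod_mul_distrib, khatriRao, cpTensor, ← prod_pow, sum_mul,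
    mul_sum]
  rw [sum_comm_cycle]
  exact sum_congr rfl fun s _ => by rw [Finset.sum_comm]; simp only [mul_comm]

end KhatriRao

end Matrix

section TopK

variable {ι : Type*}

theorem sum_mul_le_sum_of_forall_le_of_forall_notMem [Fintype ι] {f c : ι → ℝ} {T : Finset ι}
    {θ : ℝ} (hc0 : ∀ i, 0 ≤ c i) (hc1 : ∀ i, c i ≤ 1) (hsum : ∑ i, c i = #T)
    (hT : ∀ i ∈ T, θ ≤ f i) (hTc : ∀ i ∉ T, f i ≤ θ) :
    ∑ i, c i * f i ≤ ∑ i ∈ T, f i := by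
  classical
  set e : ι → ℝ := fun i => if i ∈ T then 1 else 0
  have he_sum : ∑ i, e i = #T := by simp [e]
  have he_mul : ∑ i, e i * f i = ∑ i ∈ T, f i := by simp [e]
  have hterm : ∀ i, (c i - e i) * (f i - θ) ≤ 0 := by
    intro i
    by_cases hi : i ∈ T
    · simpa [e, hi] using
        mul_nonpos_of_nonpos_of_nonneg (sub_nonpos.2 (hc1 i)) (sub_nonneg.2 (hT i hi))
    · simpa [e, hi] using mul_nonpos_of_nonneg_of_nonpos (hc0 i) (sub_nonpos.2 (hTc i hi))
  have hexpand : ∑ i, (c i - e i) * (f i - θ)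
      = ∑ i, c i * f i - ∑ i, e i * f i - (∑ i, c i - ∑ i, e i) * θ := by
    simp only [sub_mul, mul_sub, sum_sub_distrib, sum_mul]
  have hnonpos := sum_nonpos fun i (_ : i ∈ univ) => hterm i
  rw [hexpand, hsum, he_sum, he_mul] at hnonpos
  linarith

theorem exists_card_eq_forall_le_of_forall_notMem [Fintype ι] (f : ι → ℝ) {k : ℕ} (hk : 0 < k)
    (hk_le : k ≤ Fintype.card ι) :
    ∃ T : Finset ι, #T = k ∧ ∃ θ, (∀ i ∈ T, θ ≤ f i) ∧ ∀ i ∉ T, f i ≤ θ := by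
  classical
  obtain ⟨T, hT_mem, hT_max⟩ := exists_max_image (univ.powersetCard k) (fun T => ∑ i ∈ T, f i)
    (powersetCard_nonempty.2 (by simpa using hk_le))
  rw [mem_powersetCard_univ] at hT_mem
  obtain ⟨t, ht, ht_min⟩ := T.exists_min_image f (card_pos.1 (hT_mem ▸ hk))
  refine ⟨T, hT_mem, f t, ht_min, fun i hi => ?_⟩
  have hi' : i ∉ T.erase t := fun h => hi (mem_of_mem_erase h)
  have hswap := hT_max (insert i (T.erase t)) (by
    rw [mem_powersetCard_univ, card_insert_of_notMem hi', card_erase_of_mem ht, hT_mem]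
    omega)
  rw [sum_insert hi', ← add_sum_erase T f ht] at hswap
  linarith

theorem exists_card_eq_sum_mul_le_sum [Fintype ι] (f : ι → ℝ) {c : ι → ℝ} {k : ℕ}
    (hc0 : ∀ i, 0 ≤ c i) (hc1 : ∀ i, c i ≤ 1) (hsum : ∑ i, c i = k) :
    ∃ T : Finset ι, #T = k ∧ ∑ i, c i * f i ≤ ∑ i ∈ T, f i := by
  rcases Nat.eq_zero_or_pos k with rfl | hk
  · have hc : ∀ i, c i = 0 := by
      simpa [sum_eq_zero_iff_of_nonneg fun i _ => hc0 i] using hsum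
    exact ⟨∅, rfl, by simp [hc]⟩
  have hk_le : k ≤ Fintype.card ι := by
    have : (k : ℝ) ≤ Fintype.card ι := by
      simpa [hsum] using sum_le_sum fun i (_ : i ∈ univ) => hc1 i
    exact_mod_cast this
  obtain ⟨T, hT, θ, hθT, hθTc⟩ := exists_card_eq_forall_le_of_forall_notMem f hk hk_le
  exact ⟨T, hT, sum_mul_le_sum_of_forall_le_of_forall_notMem hc0 hc1 (by rw [hsum, hT]) hθT hθTc⟩

theorem sum_le_sSup_sum_comp_injective [Finite ι] (f : ι → ℝ) {k : ℕ} {T : Finset ι}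
    (hT : #T = k) :
    ∑ i ∈ T, f i ≤ sSup {x | ∃ φ : Fin k → ι, Function.Injective φ ∧ x = ∑ j, f (φ j)} := by
  refine le_csSup ((Set.finite_range fun φ : Fin k → ι => ∑ j, f (φ j)).subset ?_).bddAbove ?_
  · rintro x ⟨φ, -, rfl⟩
    exact ⟨φ, rfl⟩
  · let e := (T.equivFinOfCardEq hT).symm
    refine ⟨fun j => e j, Subtype.val_injective.comp e.injective, ?_⟩
    rw [← sum_coe_sort T, ← e.sum_comp]

end TopK

theorem stmt_1_general (d R k : ℕ) (n : Fin d → ℕ)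
    (U : ∀ p : Fin d, Matrix (Fin (n p)) (Fin R) ℝ)
    (X : ∀ p : Fin d, Matrix (Fin (n p)) (Fin k) ℝ)
    (hnorm : ∀ (p : Fin d) (j : Fin k), ∑ l, (X p l j) ^ 2 = 1)
    (horth : ∀ i j : Fin k, i ≠ j → ∏ p : Fin d, (∑ l, X p l i * X p l j) = 0) :
    ∑ j : Fin k, ∑ r : Fin R, ∏ p : Fin d, (∑ l, U p l r * (X p l j) ^ 2)
      ≤ sSup {s : ℝ | ∃ φ : Fin k → (∀ p : Fin d, Fin (n p)),
          Function.Injective φ ∧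
          s = ∑ j : Fin k, ∑ r : Fin R, ∏ p : Fin d, U p (φ j p) r} := by
  have hKR := Matrix.transpose_khatriRao_mul_khatriRao_eq_one X hnorm horth
  obtain ⟨T, hT, hle⟩ := exists_card_eq_sum_mul_le_sum (Matrix.cpTensor U)
    (fun s => by positivity) (Matrix.sum_row_sq_le_one_of_transpose_mul_self_eq_one hKR)
    (by simpa using Matrix.sum_sum_sq_eq_card_of_transpose_mul_self_eq_one hKR)
  rw [Matrix.sum_sum_prod_sum_mul_sq_eq]
  exact hle.trans (sum_le_sSup_sum_comp_injective _ hT)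

/-- Any feasible point of the continuous constrained reformulation
has objective value at most the sum of the `k` largest entries of the CP tensor
`A`, the latter being the supremum over injective selections of `k` entries. -/
theorem stmt_1 (d R k : ℕ) (n : Fin d → ℕ)
    (U : ∀ p : Fin d, Matrix (Fin (n p)) (Fin R) ℝ)
    (hk1 : 1 ≤ k) (hk2 : k ≤ ∏ p, n p)
    (X : ∀ p : Fin d, Matrix (Fin (n p)) (Fin k) ℝ)
    (hnorm : ∀ (p : Fin d) (j : Fin k), ∑ l, (X p l j) ^ 2 = 1)
    (horth : ∀ i j : Fin k, i ≠ j → ∏ p : Fin d, (∑ l, X p l i * X p l j) = 0) :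
    ∑ j : Fin k, ∑ r : Fin R, ∏ p : Fin d, (∑ l, U p l r * (X p l j) ^ 2)
      ≤ sSup {s : ℝ | ∃ φ : Fin k → (∀ p : Fin d, Fin (n p)),
          Function.Injective φ ∧
          s = ∑ j : Fin k, ∑ r : Fin R, ∏ p : Fin d, U p (φ j p) r} :=
  stmt_1_general d R k n U X hnorm horth
end

section
/- Let A be a d-th order CP tensor with factor matrices U_p ∈ ℝ^{n_p×R}, and let k be an integer with 1 ≤ k ≤ ∏_{p=1}^d n_p. Consider the optimization problem: minimize Σ_{j=1}^k Σ_{r=1}^R ∏_{p=1}^d ( Σ_{l=1}^{n_p} U_p(l,r)·X_p(l,j)² ) over families of matrices X_p ∈ ℝ^{n_p×k} (p = 1,…,d) subject to ‖X_p(:,j)‖₂ = 1 for all p and j, and ∏_{p=1}^d ⟨X_p(:,i), X_p(:,j)⟩ = 0 for all i ≠ j. Then this minimum is attained and equals the sum of the k smallest entries of A. -/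
/-!
Put `Y_j = X₁(:,j) ⊗ ⋯ ⊗ X_d(:,j)`, the columns of the Khatri–Rao product. The constraints say
exactly that the `Y_j` are orthonormal in `ℝ^I`, and the objective equals `∑ i, c i * A i` with
`c i = ∑ j, Y_j(i)²`. Bessel's inequality gives `0 ≤ c i ≤ 1`, and `∑ i, c i = k`; on this
polytope a linear functional is minimised at the indicator of the `k` smallest entries of `A`.
Conversely, unit-vector columns picking `k` distinct multi-indices are feasible and attain that
value.
-/

open Finset

section SmallestValues

variable {ι : Type*} [Fintype ι]

theorem exists_threshold_of_forall_le (S : Finset ι) (A : ι → ℝ)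
    (h : ∀ i ∈ S, ∀ j ∉ S, A i ≤ A j) :
    ∃ t, (∀ i ∈ S, A i ≤ t) ∧ ∀ j ∉ S, t ≤ A j := by
  rcases S.eq_empty_or_nonempty with rfl | hS
  · obtain ⟨t, ht⟩ := (Set.finite_range A).bddBelow
    exact ⟨t, by simp, fun j _ => ht ⟨j, rfl⟩⟩
  · exact ⟨S.sup' hS A, fun i hi => le_sup' A hi,
      fun j hj => sup'_le hS A fun i hi => h i hi j hj⟩

variable [DecidableEq ι]

/-- A `k`-subset of least sum: exchanging one of its elements for an outside one would
otherwise decrease the sum. -/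
theorem exists_card_eq_forall_le_of_mem_of_notMem (A : ι → ℝ) {k : ℕ}
    (hk : k ≤ Fintype.card ι) :
    ∃ S : Finset ι, #S = k ∧ ∀ i ∈ S, ∀ j ∉ S, A i ≤ A j := by
  obtain ⟨S, hS, hmin⟩ := (powersetCard k univ).exists_min_image (fun S => ∑ i ∈ S, A i)
    (powersetCard_nonempty.2 (by simpa using hk))
  rw [mem_powersetCard] at hS
  refine ⟨S, hS.2, fun i hi j hj => ?_⟩
  have hj' : j ∉ S.erase i := fun h => hj (mem_of_mem_erase h)
  have hexch : insert j (S.erase i) ∈ powersetCard k univ := by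
    rw [mem_powersetCard, card_insert_of_notMem hj', card_erase_of_mem hi]
    have := card_pos.2 ⟨i, hi⟩
    exact ⟨subset_univ _, by omega⟩
  have := hmin _ hexch
  rw [sum_insert hj', ← add_sum_erase S A hi] at this
  linarith

/-- Each term of `∑ i, (c i - 𝟙_S i) * (A i - t)` is nonnegative, and the sum equals
`∑ i, c i * A i - ∑ i ∈ S, A i` because `c` and `𝟙_S` have the same total mass. -/
theorem sum_le_sum_mul_of_threshold (S : Finset ι) (A c : ι → ℝ) (t : ℝ)
    (hA_le : ∀ i ∈ S, A i ≤ t) (hle_A : ∀ j ∉ S, t ≤ A j)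
    (hc0 : ∀ i, 0 ≤ c i) (hc1 : ∀ i, c i ≤ 1) (hc : ∑ i, c i = #S) :
    ∑ i ∈ S, A i ≤ ∑ i, c i * A i := by
  have hterm : ∀ i, 0 ≤ (c i - if i ∈ S then 1 else 0) * (A i - t) := by
    intro i
    split_ifs with hi
    · exact mul_nonneg_of_nonpos_of_nonpos (by linarith [hc1 i]) (by linarith [hA_le i hi])
    · simpa using mul_nonneg (hc0 i) (sub_nonneg.2 (hle_A i hi))
  have hmass : ∑ i, (if i ∈ S then 1 else 0 : ℝ) = #S := by simp
  have hsum : ∑ i ∈ S, A i = ∑ i, (if i ∈ S then 1 else 0) * A i := by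
    simp [ite_mul, sum_ite_mem]
  have := sum_nonneg fun i (_ : i ∈ univ) => hterm i
  simp only [sub_mul, mul_sub, sum_sub_distrib, ← sum_mul, hc, hmass] at this
  linarith

theorem exists_injective_sum_le_sum_mul (A c : ι → ℝ) (hc0 : ∀ i, 0 ≤ c i)
    (hc1 : ∀ i, c i ≤ 1) {k : ℕ} (hc : ∑ i, c i = k) :
    ∃ φ : Fin k → ι, Function.Injective φ ∧ ∑ j, A (φ j) ≤ ∑ i, c i * A i := by
  have hk : k ≤ Fintype.card ι := by
    have : ∑ i, c i ≤ ∑ _i : ι, (1 : ℝ) := sum_le_sum fun i _ => hc1 i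
    exact_mod_cast (by simpa [hc] using this : (k : ℝ) ≤ Fintype.card ι)
  obtain ⟨S, hS, hexch⟩ := exists_card_eq_forall_le_of_mem_of_notMem A hk
  obtain ⟨t, hA_le, hle_A⟩ := exists_threshold_of_forall_le S A hexch
  let e := S.equivFinOfCardEq hS
  refine ⟨fun j => e.symm j, Subtype.val_injective.comp e.symm.injective, ?_⟩
  rw [e.symm.sum_comp (fun i : S => A i), sum_coe_sort S A]
  exact sum_le_sum_mul_of_threshold S A c t hA_le hle_A hc0 hc1 (by rw [hc, hS])

end SmallestValues

section CPTensor

variable {ι : Type*} [Fintype ι] [DecidableEq ι] {κ : ι → Type*} [∀ p, Fintype (κ p)]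
  {J ρ : Type*}

def cpEntry [Fintype ρ] (U : ∀ p, Matrix (κ p) ρ ℝ) (i : ∀ p, κ p) : ℝ :=
  ∑ r, ∏ p, U p (i p) r

def relaxedObjective [Fintype J] [Fintype ρ] (U : ∀ p, Matrix (κ p) ρ ℝ)
    (X : ∀ p, Matrix (κ p) J ℝ) : ℝ :=
  ∑ j, ∑ r, ∏ p, ∑ l, U p l r * X p l j ^ 2

def khatriRaoCol (X : ∀ p, Matrix (κ p) J ℝ) (j : J) (i : ∀ p, κ p) : ℝ :=
  ∏ p, X p (i p) j

theorem sum_khatriRaoCol_mul (X : ∀ p, Matrix (κ p) J ℝ) (a b : J) :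
    ∑ i, khatriRaoCol X a i * khatriRaoCol X b i = ∏ p, ∑ l, X p l a * X p l b := by
  simp only [khatriRaoCol, ← prod_mul_distrib, Fintype.prod_sum]

theorem orthonormal_khatriRaoCol (X : ∀ p, Matrix (κ p) J ℝ)
    (hX1 : ∀ p j, ∑ l, X p l j ^ 2 = 1)
    (hX2 : ∀ a b, a ≠ b → ∏ p, ∑ l, X p l a * X p l b = 0) :
    Orthonormal ℝ fun j => (WithLp.toLp 2 (khatriRaoCol X j) : EuclideanSpace ℝ (∀ p, κ p)) := by
  classical
  rw [orthonormal_iff_ite]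
  intro a b
  have hinner : inner ℝ (WithLp.toLp 2 (khatriRaoCol X a) : EuclideanSpace ℝ (∀ p, κ p))
      (WithLp.toLp 2 (khatriRaoCol X b)) = ∏ p, ∑ l, X p l a * X p l b := by
    simp [PiLp.inner_apply, ← sum_khatriRaoCol_mul, mul_comm]
  rw [hinner]
  split_ifs with hab
  · subst hab
    simp [← sq, hX1]
  · exact hX2 a b hab

/-- Bessel's inequality for the orthonormal Khatri–Rao columns, tested against the
coordinate vector at `i`. -/
theorem sum_sq_khatriRaoCol_le_one [Fintype J] (X : ∀ p, Matrix (κ p) J ℝ)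
    (hX1 : ∀ p j, ∑ l, X p l j ^ 2 = 1)
    (hX2 : ∀ a b, a ≠ b → ∏ p, ∑ l, X p l a * X p l b = 0) (i : ∀ p, κ p) :
    ∑ j, khatriRaoCol X j i ^ 2 ≤ 1 := by
  classical
  have := (orthonormal_khatriRaoCol X hX1 hX2).sum_inner_products_le
    (EuclideanSpace.single i (1 : ℝ)) (s := univ)
  simpa [EuclideanSpace.inner_single_right] using this

theorem sum_sum_sq_khatriRaoCol [Fintype J] (X : ∀ p, Matrix (κ p) J ℝ)
    (hX1 : ∀ p j, ∑ l, X p l j ^ 2 = 1) :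
    ∑ i, ∑ j, khatriRaoCol X j i ^ 2 = Fintype.card J := by
  have hnorm : ∀ j, ∑ i, khatriRaoCol X j i ^ 2 = 1 := fun j => by
    simpa [← sq, hX1] using sum_khatriRaoCol_mul X j j
  rw [sum_comm]
  simp [hnorm]

theorem relaxedObjective_eq_sum_mul_cpEntry [Fintype J] [Fintype ρ]
    (U : ∀ p, Matrix (κ p) ρ ℝ) (X : ∀ p, Matrix (κ p) J ℝ) :
    relaxedObjective U X = ∑ i, (∑ j, khatriRaoCol X j i ^ 2) * cpEntry U i := by
  simp_rw [relaxedObjective, Fintype.prod_sum, khatriRaoCol, cpEntry, sum_mul_sum,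
    prod_mul_distrib, prod_pow]
  rw [sum_congr rfl fun j _ => sum_comm, sum_comm]
  exact sum_congr rfl fun _ _ => sum_congr rfl fun _ _ => sum_congr rfl fun _ _ => mul_comm _ _

end CPTensor

section UnitColumns

variable {ι : Type*} {κ : ι → Type*} [∀ p, Fintype (κ p)] [∀ p, DecidableEq (κ p)]
  {J : Type*}

def unitColumns (φ : J → ∀ p, κ p) : ∀ p, Matrix (κ p) J ℝ :=
  fun p l j => if φ j p = l then 1 else 0

theorem sum_sq_unitColumns (φ : J → ∀ p, κ p) (p : ι) (j : J) :
    ∑ l, unitColumns φ p l j ^ 2 = 1 := by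
  simp [unitColumns]

theorem prod_sum_unitColumns_mul_eq_zero [Fintype ι] {φ : J → ∀ p, κ p}
    (hφ : Function.Injective φ) {a b : J} (hab : a ≠ b) :
    ∏ p, ∑ l, unitColumns φ p l a * unitColumns φ p l b = 0 := by
  obtain ⟨p, hp⟩ : ∃ p, φ a p ≠ φ b p := Function.ne_iff.1 (hφ.ne hab)
  refine prod_eq_zero (mem_univ p) ?_
  simp [unitColumns, hp]

theorem relaxedObjective_unitColumns [Fintype ι] [Fintype J] {ρ : Type*} [Fintype ρ]
    (U : ∀ p, Matrix (κ p) ρ ℝ) (φ : J → ∀ p, κ p) :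
    relaxedObjective U (unitColumns φ) = ∑ j, cpEntry U (φ j) := by
  simp [relaxedObjective, unitColumns, cpEntry]

end UnitColumns

theorem stmt_3_general (d R k : ℕ) (n : Fin d → ℕ)
    (U : ∀ p : Fin d, Matrix (Fin (n p)) (Fin R) ℝ)
    (hk2 : k ≤ ∏ p, n p) :
    ∃ m : ℝ,
      IsLeast {s : ℝ | ∃ φ : Fin k → (∀ p : Fin d, Fin (n p)),
          Function.Injective φ ∧
          s = ∑ j : Fin k, ∑ r : Fin R, ∏ p : Fin d, U p (φ j p) r} m ∧
      IsLeast {v : ℝ | ∃ X : ∀ p : Fin d, Matrix (Fin (n p)) (Fin k) ℝ,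
          (∀ (p : Fin d) (j : Fin k), ∑ l, (X p l j) ^ 2 = 1) ∧
          (∀ i j : Fin k, i ≠ j → ∏ p : Fin d, (∑ l, X p l i * X p l j) = 0) ∧
          v = ∑ j : Fin k, ∑ r : Fin R,
              ∏ p : Fin d, (∑ l, U p l r * (X p l j) ^ 2)} m := by
  have hinj : {φ : Fin k → ∀ p, Fin (n p) | Function.Injective φ}.Nonempty := by
    obtain ⟨f⟩ := Function.Embedding.nonempty_of_card_le
      (by simpa using hk2 : Fintype.card (Fin k) ≤ Fintype.card (∀ p, Fin (n p)))
    exact ⟨f, f.injective⟩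
  obtain ⟨φ₀, hφ₀, hmin⟩ :=
    Set.exists_min_image _ (fun φ => ∑ j, cpEntry U (φ j)) (Set.toFinite _) hinj
  refine ⟨∑ j, cpEntry U (φ₀ j), ⟨⟨φ₀, hφ₀, rfl⟩, ?_⟩,
    ⟨⟨unitColumns φ₀, sum_sq_unitColumns φ₀, fun _ _ => prod_sum_unitColumns_mul_eq_zero hφ₀,
      (relaxedObjective_unitColumns U φ₀).symm⟩, ?_⟩⟩
  · rintro _ ⟨φ, hφ, rfl⟩
    exact hmin φ hφ
  · rintro _ ⟨X, hX1, hX2, rfl⟩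
    obtain ⟨φ, hφ, hle⟩ := exists_injective_sum_le_sum_mul (cpEntry U)
      (fun i => ∑ j, khatriRaoCol X j i ^ 2) (fun i => sum_nonneg fun j _ => sq_nonneg _)
      (sum_sq_khatriRaoCol_le_one X hX1 hX2) (by simpa using sum_sum_sq_khatriRaoCol X hX1)
    exact (hmin φ hφ).trans (hle.trans_eq (relaxedObjective_eq_sum_mul_cpEntry U X).symm)

/-- The minimum of the continuous constrained reformulation is
attained and equals the sum of the `k` smallest entries of the CP tensor `A`. -/
theorem stmt_3 (d R k : ℕ) (n : Fin d → ℕ)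
    (U : ∀ p : Fin d, Matrix (Fin (n p)) (Fin R) ℝ)
    (hk1 : 1 ≤ k) (hk2 : k ≤ ∏ p, n p) :
    ∃ m : ℝ,
      IsLeast {s : ℝ | ∃ φ : Fin k → (∀ p : Fin d, Fin (n p)),
          Function.Injective φ ∧
          s = ∑ j : Fin k, ∑ r : Fin R, ∏ p : Fin d, U p (φ j p) r} m ∧
      IsLeast {v : ℝ | ∃ X : ∀ p : Fin d, Matrix (Fin (n p)) (Fin k) ℝ,
          (∀ (p : Fin d) (j : Fin k), ∑ l, (X p l j) ^ 2 = 1) ∧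
          (∀ i j : Fin k, i ≠ j → ∏ p : Fin d, (∑ l, X p l i * X p l j) = 0) ∧
          v = ∑ j : Fin k, ∑ r : Fin R,
              ∏ p : Fin d, (∑ l, U p l r * (X p l j) ^ 2)} m :=
  stmt_3_general d R k n U hk2
end

section
/- Let A be a d-th order CP tensor with factor matrices U_p ∈ ℝ^{n_p×R}. Then the maximum of Σ_{r=1}^R ∏_{p=1}^d ( Σ_{l=1}^{n_p} U_p(l,r)·x_p(l)² ) over all families of vectors x_p ∈ ℝ^{n_p} with ‖x_p‖₂ = 1 for every p = 1,…,d is attained and equals the largest entry of A, i.e., max_{(i_1,…,i_d) ∈ I} A(i_1,…,i_d). -/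
open Finset

/-- The maximum of `∑ r, ∏ p, (∑ l, U p l r * (x p l)^2)` over
families of unit vectors `x p` is attained and equals the largest entry of the
CP tensor `A (i₁,…,i_d) = ∑ r, ∏ p, U p (i p) r`. -/
theorem stmt_4 (d R : ℕ) (n : Fin d → ℕ) (hn : ∀ p, 0 < n p)
    (U : ∀ p : Fin d, Matrix (Fin (n p)) (Fin R) ℝ) :
    ∃ m : ℝ,
      IsGreatest {a : ℝ | ∃ i : ∀ p : Fin d, Fin (n p),
          a = ∑ r : Fin R, ∏ p : Fin d, U p (i p) r} m ∧
      IsGreatest {v : ℝ | ∃ x : ∀ p : Fin d, Fin (n p) → ℝ,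
          (∀ p : Fin d, ∑ l, (x p l) ^ 2 = 1) ∧
          v = ∑ r : Fin R, ∏ p : Fin d, (∑ l, U p l r * (x p l) ^ 2)} m := by
  haveI : ∀ p : Fin d, Nonempty (Fin (n p)) := fun p => ⟨⟨0, hn p⟩⟩
  set f : (∀ p : Fin d, Fin (n p)) → ℝ := fun i => ∑ r : Fin R, ∏ p : Fin d, U p (i p) r with hf
  obtain ⟨i₀, -, hi₀⟩ := Finset.exists_max_image (Finset.univ : Finset (∀ p : Fin d, Fin (n p)))
    f ⟨Classical.arbitrary _, Finset.mem_univ _⟩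
  refine ⟨f i₀, ⟨⟨i₀, rfl⟩, ?_⟩, ⟨?_, ?_⟩⟩
  · rintro a ⟨i, rfl⟩
    exact hi₀ i (Finset.mem_univ i)
  · -- attained by indicator vectors
    refine ⟨fun p l => if l = i₀ p then 1 else 0, fun p => ?_, ?_⟩
    · simp
    · show f i₀ = _
      simp only [hf]
      refine Finset.sum_congr rfl fun r _ => Finset.prod_congr rfl fun p _ => ?_
      simp
  · rintro v ⟨x, hx, rfl⟩
    have key : ∀ r : Fin R, ∏ p : Fin d, (∑ l, U p l r * (x p l) ^ 2)
        = ∑ i : ∀ p : Fin d, Fin (n p), ∏ p : Fin d, (U p (i p) r * (x p (i p)) ^ 2) := by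
      intro r
      exact Finset.prod_univ_sum _ _
    have hw : ∀ i : ∀ p : Fin d, Fin (n p), (0:ℝ) ≤ ∏ p : Fin d, (x p (i p)) ^ 2 :=
      fun i => Finset.prod_nonneg fun p _ => sq_nonneg _
    have hwsum : ∑ i : ∀ p : Fin d, Fin (n p), ∏ p : Fin d, (x p (i p)) ^ 2 = 1 := by
      have h : (∏ p : Fin d, ∑ l, (x p l) ^ 2)
          = ∑ i : ∀ p : Fin d, Fin (n p), ∏ p : Fin d, (x p (i p)) ^ 2 :=
        Finset.prod_univ_sum _ _
      rw [← h]
      simp [hx]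
    calc ∑ r : Fin R, ∏ p : Fin d, (∑ l, U p l r * (x p l) ^ 2)
        = ∑ i : ∀ p : Fin d, Fin (n p), f i * ∏ p : Fin d, (x p (i p)) ^ 2 := by
          simp only [key]
          rw [Finset.sum_comm]
          refine Finset.sum_congr rfl fun i _ => ?_
          rw [hf, Finset.sum_mul]
          refine Finset.sum_congr rfl fun r _ => ?_
          rw [← Finset.prod_mul_distrib]
      _ ≤ ∑ i : ∀ p : Fin d, Fin (n p), f i₀ * ∏ p : Fin d, (x p (i p)) ^ 2 := by
          refine Finset.sum_le_sum fun i _ => ?_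
          exact mul_le_mul_of_nonneg_right (hi₀ i (Finset.mem_univ i)) (hw i)
      _ = f i₀ := by rw [← Finset.mul_sum, hwsum, mul_one]
end

section
/- Let A be a d-th order CP tensor with factor matrices U_p ∈ ℝ^{n_p×R}, and suppose there is a multi-index i* = (i*_1,…,i*_d) ∈ I such that A(i*) > A(i) for every i ∈ I with i ≠ i*. If vectors x_p ∈ ℝ^{n_p} with ‖x_p‖₂ = 1 for all p satisfy Σ_{r=1}^R ∏_{p=1}^d ( Σ_{l=1}^{n_p} U_p(l,r)·x_p(l)² ) = A(i*), then for every p = 1,…,d we have x_p(l) = 0 for all l ≠ i*_p (equivalently, x_p(i*_p)² = 1), so the maximizer identifies the location of the largest entry of A. -/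
open Finset

/-- If the CP tensor `A` has a strictly largest entry at `i*`, and
unit vectors `x p` attain the objective value `A i*`, then each `x p` is
supported on the coordinate `i* p` (so `(x p (i* p))^2 = 1`): the maximizer
identifies the location of the largest entry. -/
theorem stmt_8 (d R : ℕ) (n : Fin d → ℕ)
    (U : ∀ p : Fin d, Matrix (Fin (n p)) (Fin R) ℝ)
    (istar : ∀ p : Fin d, Fin (n p))
    (hstar : ∀ i : ∀ p : Fin d, Fin (n p), i ≠ istar →
      ∑ r : Fin R, ∏ p : Fin d, U p (i p) r
        < ∑ r : Fin R, ∏ p : Fin d, U p (istar p) r)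
    (x : ∀ p : Fin d, Fin (n p) → ℝ)
    (hx : ∀ p : Fin d, ∑ l, (x p l) ^ 2 = 1)
    (hval : ∑ r : Fin R, ∏ p : Fin d, (∑ l, U p l r * (x p l) ^ 2)
      = ∑ r : Fin R, ∏ p : Fin d, U p (istar p) r) :
    (∀ (p : Fin d) (l : Fin (n p)), l ≠ istar p → x p l = 0) ∧
    (∀ p : Fin d, (x p (istar p)) ^ 2 = 1) := by
  classical
  set A : (∀ p : Fin d, Fin (n p)) → ℝ := fun i => ∑ r : Fin R, ∏ p, U p (i p) r with hA
  set w : (∀ p : Fin d, Fin (n p)) → ℝ := fun i => ∏ p, (x p (i p)) ^ 2 with hwdef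
  have hwnn : ∀ i, 0 ≤ w i := fun i => Finset.prod_nonneg fun p _ => sq_nonneg _
  have hsumw : ∑ i : (∀ p : Fin d, Fin (n p)), w i = 1 := by
    have := Finset.prod_univ_sum (fun p : Fin d => (Finset.univ : Finset (Fin (n p))))
      (fun p l => (x p l) ^ 2)
    simp only [hx, Finset.prod_const_one, Fintype.piFinset_univ] at this
    exact this.symm
  have h1 : ∀ r : Fin R, (∏ p, (∑ l, U p l r * (x p l) ^ 2))
      = ∑ i : (∀ p : Fin d, Fin (n p)), (∏ p, U p (i p) r) * w i := by
    intro r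
    rw [Finset.prod_univ_sum, Fintype.piFinset_univ]
    exact Finset.sum_congr rfl fun i _ => Finset.prod_mul_distrib
  have hLHS : ∑ r : Fin R, ∏ p : Fin d, (∑ l, U p l r * (x p l) ^ 2)
      = ∑ i : (∀ p : Fin d, Fin (n p)), w i * A i := by
    simp only [h1]
    rw [Finset.sum_comm]
    exact Finset.sum_congr rfl fun i _ => by
      rw [hA, Finset.mul_sum]
      exact Finset.sum_congr rfl fun r _ => mul_comm _ _
  have hzero : ∑ i : (∀ p : Fin d, Fin (n p)), w i * (A istar - A i) = 0 := by
    have : ∑ i : (∀ p : Fin d, Fin (n p)), w i * (A istar - A i)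
        = (∑ i : (∀ p : Fin d, Fin (n p)), w i) * A istar
          - ∑ i : (∀ p : Fin d, Fin (n p)), w i * A i := by
      rw [Finset.sum_mul, ← Finset.sum_sub_distrib]
      exact Finset.sum_congr rfl fun i _ => by ring
    rw [this, hsumw, ← hLHS, hval, hA, one_mul, sub_self]
  have hterm : ∀ i : (∀ p : Fin d, Fin (n p)), w i * (A istar - A i) = 0 := by
    intro i
    have := (Finset.sum_eq_zero_iff_of_nonneg (fun i _ => by
      rcases eq_or_ne i istar with h | h
      · simp [h]
      · exact mul_nonneg (hwnn i) (le_of_lt (sub_pos.mpr (hstar i h))))).mp hzero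
    exact this i (Finset.mem_univ i)
  have hwzero : ∀ i : (∀ p : Fin d, Fin (n p)), i ≠ istar → w i = 0 := by
    intro i hi
    have h := hterm i
    have hpos : 0 < A istar - A i := sub_pos.mpr (hstar i hi)
    rcases mul_eq_zero.mp h with h' | h'
    · exact h'
    · exact absurd h' (ne_of_gt hpos)
  have hwstar : w istar = 1 := by
    rw [← hsumw, Finset.sum_eq_single istar (fun i _ hi => hwzero i hi) (by simp)]
  have hle1 : ∀ (p : Fin d) (l : Fin (n p)), (x p l) ^ 2 ≤ 1 := by
    intro p l
    rw [← hx p]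
    exact Finset.single_le_sum (f := fun l => (x p l) ^ 2) (fun l _ => sq_nonneg _) (Finset.mem_univ l)
  have hfac : ∀ p : Fin d, (x p (istar p)) ^ 2 = 1 := by
    intro p
    have h1le : (1 : ℝ) ≤ (x p (istar p)) ^ 2 := by
      calc (1 : ℝ) = w istar := hwstar.symm
        _ ≤ ∏ q, if q = p then (x p (istar p)) ^ 2 else 1 := by
            apply Finset.prod_le_prod (fun q _ => sq_nonneg _)
            intro q _
            by_cases hq : q = p
            · subst hq; simp
            · simp [hq, hle1]
        _ = (x p (istar p)) ^ 2 := by simp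
    exact le_antisymm (hle1 p _) h1le
  refine ⟨?_, hfac⟩
  intro p l hl
  have hrest : ∑ l' ∈ Finset.univ.erase (istar p), (x p l') ^ 2 = 0 := by
    have := hx p
    rw [← Finset.add_sum_erase _ _ (Finset.mem_univ (istar p)), hfac p] at this
    linarith
  have := (Finset.sum_eq_zero_iff_of_nonneg (fun l' _ => sq_nonneg (x p l'))).mp hrest
  have h0 := this l (Finset.mem_erase.mpr ⟨hl, Finset.mem_univ l⟩)
  exact pow_eq_zero_iff (by norm_num) |>.mp h0
end

section
/- Let a ∈ ℝ^N, let D = diag(a) be the N×N diagonal matrix with diagonal entries a, and let k be an integer with 1 ≤ k ≤ N. If X ∈ ℝ^{N×k} satisfies XᵀX = I_k, then tr(XᵀDX) ≤ the sum of the k largest entries of a. -/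
open Finset Matrix

/-- For a diagonal matrix `D = diag a` and any `X` with
orthonormal columns (`Xᵀ X = I_k`), `tr (Xᵀ D X)` is at most the sum of the
`k` largest entries of `a`. -/
theorem stmt_13 (N k : ℕ) (a : Fin N → ℝ) (hk1 : 1 ≤ k) (hk2 : k ≤ N)
    (X : Matrix (Fin N) (Fin k) ℝ) (hX : Xᵀ * X = 1) :
    (Xᵀ * Matrix.diagonal a * X).trace
      ≤ sSup {s : ℝ | ∃ φ : Fin k → Fin N, Function.Injective φ ∧
          s = ∑ j : Fin k, a (φ j)} := by
  classical
  set w : Fin N → ℝ := fun i => ∑ j, X i j * X i j with hw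
  have hw0 : ∀ i, 0 ≤ w i := fun i =>
    Finset.sum_nonneg fun j _ => mul_self_nonneg _
  -- trace identity
  have htr : (Xᵀ * Matrix.diagonal a * X).trace = ∑ i, a i * w i := by
    simp only [Matrix.trace, Matrix.diag, Matrix.mul_apply, Matrix.transpose_apply,
      Matrix.diagonal_apply]
    rw [Finset.sum_comm]
    refine Finset.sum_congr rfl fun i _ => ?_
    rw [hw, Finset.mul_sum]
    refine Finset.sum_congr rfl fun j _ => ?_
    rw [Finset.sum_eq_single i]
    · simp; ring
    · intro b _ hb; simp [hb]
    · simp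
  -- sum of w = k
  have hsum : ∑ i, w i = (k : ℝ) := by
    have h1 := congrArg Matrix.trace hX
    simp only [Matrix.trace, Matrix.diag, Matrix.mul_apply, Matrix.transpose_apply,
      Matrix.one_apply] at h1
    simp only [hw]
    rw [Finset.sum_comm, h1]
    simp
  -- w ≤ 1
  have hP : (X * Xᵀ) * (X * Xᵀ) = X * Xᵀ := by
    rw [Matrix.mul_assoc, ← Matrix.mul_assoc Xᵀ, hX, Matrix.one_mul]
  have hw1 : ∀ i, w i ≤ 1 := by
    intro i
    have hPii : (X * Xᵀ) i i = w i := by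
      simp [Matrix.mul_apply, hw]
    have hsq : w i = ∑ j, ((X * Xᵀ) i j) * ((X * Xᵀ) i j) := by
      have h2 := congrFun (congrFun hP i) i
      rw [Matrix.mul_apply] at h2
      rw [← hPii, ← h2]
      refine Finset.sum_congr rfl fun j _ => ?_
      congr 1
      simp only [Matrix.mul_apply, Matrix.transpose_apply]
      exact Finset.sum_congr rfl fun m _ => mul_comm _ _
    have hge : w i * w i ≤ w i := by
      calc w i * w i = ((X * Xᵀ) i i) * ((X * Xᵀ) i i) := by rw [hPii]
        _ ≤ ∑ j, ((X * Xᵀ) i j) * ((X * Xᵀ) i j) :=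
            Finset.single_le_sum (f := fun j => ((X * Xᵀ) i j) * ((X * Xᵀ) i j))
              (fun j _ => mul_self_nonneg _) (Finset.mem_univ i)
        _ = w i := hsq.symm
    nlinarith [hw0 i]
  -- choose maximizing k-subset
  have hne : ((Finset.univ : Finset (Fin N)).powersetCard k).Nonempty := by
    rw [Finset.powersetCard_nonempty]; simpa using hk2
  obtain ⟨s, hs_mem, hs_max⟩ :=
    Finset.exists_max_image _ (fun t => ∑ i ∈ t, a i) hne
  have hs_card : s.card = k := Finset.mem_powersetCard_univ.mp hs_mem
  have hs_ne : s.Nonempty := Finset.card_pos.mp (by omega)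
  obtain ⟨j0, hj0, hj0min⟩ := Finset.exists_min_image s a hs_ne
  -- out-of-s entries are ≤ a j0
  have hout : ∀ i, i ∉ s → a i ≤ a j0 := by
    intro i hi
    by_contra h
    push_neg at h
    have hi' : i ∉ s.erase j0 := fun hmem => hi (Finset.mem_of_mem_erase hmem)
    have hcard' : (insert i (s.erase j0)).card = k := by
      rw [Finset.card_insert_of_notMem hi', Finset.card_erase_of_mem hj0, hs_card]
      omega
    have hle := hs_max (insert i (s.erase j0)) (Finset.mem_powersetCard_univ.mpr hcard')
    rw [Finset.sum_insert hi'] at hle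
    have herase : a j0 + ∑ x ∈ s.erase j0, a x = ∑ x ∈ s, a x :=
      Finset.add_sum_erase s a hj0
    linarith
  -- key inequality
  have key : ∑ i, a i * w i ≤ ∑ i ∈ s, a i := by
    have hsplit : ∑ i, a i * w i = ∑ i ∈ s, a i * w i + ∑ i ∈ sᶜ, a i * w i :=
      (Finset.sum_add_sum_compl s _).symm
    have hwsplit : ∑ i ∈ s, w i + ∑ i ∈ sᶜ, w i = (k : ℝ) := by
      rw [Finset.sum_add_sum_compl]; exact hsum
    have h1 : ∑ i ∈ sᶜ, a i * w i ≤ a j0 * ∑ i ∈ sᶜ, w i := by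
      rw [Finset.mul_sum]
      refine Finset.sum_le_sum fun i hi => ?_
      exact mul_le_mul_of_nonneg_right (hout i (Finset.mem_compl.mp hi)) (hw0 i)
    have h2 : ∑ i ∈ s, a j0 * (1 - w i) = a j0 * ∑ i ∈ sᶜ, w i := by
      rw [← Finset.mul_sum, Finset.sum_sub_distrib, Finset.sum_const, hs_card]
      have : ∑ i ∈ sᶜ, w i = (k : ℝ) - ∑ i ∈ s, w i := by linarith
      rw [this]
      simp
    have h3 : ∑ i ∈ s, (a i * w i + a j0 * (1 - w i)) ≤ ∑ i ∈ s, a i := by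
      refine Finset.sum_le_sum fun i hi => ?_
      nlinarith [hw0 i, hw1 i, hj0min i hi]
    rw [Finset.sum_add_distrib, h2] at h3
    linarith
  -- the maximizing subset realizes an element of the set
  have hmem : (∑ i ∈ s, a i) ∈ {s : ℝ | ∃ φ : Fin k → Fin N, Function.Injective φ ∧
      s = ∑ j : Fin k, a (φ j)} := by
    refine ⟨fun j => (s.orderIsoOfFin hs_card j : Fin N), ?_, ?_⟩
    · intro x y hxy
      exact (s.orderIsoOfFin hs_card).injective (Subtype.ext hxy)
    · rw [← Finset.sum_attach s a, ← Finset.univ_eq_attach]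
      exact (Equiv.sum_comp (s.orderIsoOfFin hs_card).toEquiv
        (fun x : {x // x ∈ s} => a (x : Fin N))).symm
  have hbdd : BddAbove {s : ℝ | ∃ φ : Fin k → Fin N, Function.Injective φ ∧
      s = ∑ j : Fin k, a (φ j)} := by
    apply Set.Finite.bddAbove
    apply Set.Finite.subset (Set.finite_range fun φ : Fin k → Fin N => ∑ j, a (φ j))
    rintro x ⟨φ, _, rfl⟩
    exact ⟨φ, rfl⟩
  calc (Xᵀ * Matrix.diagonal a * X).trace = ∑ i, a i * w i := htr
    _ ≤ ∑ i ∈ s, a i := key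
    _ ≤ _ := le_csSup hbdd hmem
end
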